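/- Let f belong to (an equivalence class in) L^1(P̃_X), let h be a linear game value whose coefficients w_i(S,N) are nonnegative and sum to one over S ⊆ N∖{i}, and let (𝒮^(k), X^(k)), k = 1,…,K, be independent random samples from the product measure P_i^{(h)} ⊗ P_X. Then for P_X-almost every x*, the Monte Carlo estimator K^{-1} Σ_{k=1}^K Δ_i(𝒮^(k), X^(k); x*, f) is an unbiased estimator of h_i[N, v^{ME}(·; x*, X, f)], and the error E_K := K^{-1} Σ_{k=1}^K Δ_i(𝒮^(k), X^(k); x*, f) − h_i[N, v^{ME}(·; x*, X, f)] converges to 0 in probability as K → ∞. If moreover f ∈ L^2(P̃_X), then ‖E_K‖²_{L²(ℙ)} ≤ (4/K) · (max_{S⊆N∖{i}} w_i(S,N)) · ν_{x*}^{(2)}(f), so E_K → 0 in L²(ℙ) at rate O(K^{-1/2}). -/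

import Mathlib

open MeasureTheory ProbabilityTheory ENNReal Filter Finset

noncomputable section

/-- Discrete σ-algebra on the (finite) space of coalitions. -/
instance {k : ℕ} : MeasurableSpace (Finset (Fin k)) := ⊤

/-- `merge n S y x` is the vector in `ℝ^n` agreeing with `y` on `S` and with `x` on `N∖S`,
i.e. the vector `(y_S, x_{-S})`. -/
def merge (n : ℕ) (S : Finset (Fin n)) (y x : Fin n → ℝ) : Fin n → ℝ :=
  fun i => if i ∈ S then y i else x i

/-- The product measure `P_{X_S} ⊗ P_{X_{-S}}` viewed as a measure on `ℝ^n`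
(obtained by merging two independent copies along `S`). -/
def prodPart (n : ℕ) (P : Measure (Fin n → ℝ)) (S : Finset (Fin n)) :
    Measure (Fin n → ℝ) :=
  (P.prod P).map (fun q => merge n S q.1 q.2)

/-- The mixture measure `P̃_X = 2^{-n} ∑_{S ⊆ N} P_{X_S} ⊗ P_{X_{-S}}` on `ℝ^n`. -/
def tildeP (n : ℕ) (P : Measure (Fin n → ℝ)) : Measure (Fin n → ℝ) :=
  ((2 : ℝ≥0∞) ^ n)⁻¹ • ∑ S : Finset (Fin n), prodPart n P S

/-- The marginal game `v^{ME}(S; x*, X, f) = E[f(x*_S, X_{-S})]`. -/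
def vME (n : ℕ) (P : Measure (Fin n → ℝ)) (f : (Fin n → ℝ) → ℝ)
    (xs : Fin n → ℝ) (S : Finset (Fin n)) : ℝ :=
  ∫ x, f (merge n S xs x) ∂P

/-- A linear game value `h_i[N,v] = ∑_{S ⊆ N∖{i}} w(S) (v(S∪{i}) - v(S))`. -/
def gameValue (n : ℕ) (w : Finset (Fin n) → ℝ) (i : Fin n)
    (v : Finset (Fin n) → ℝ) : ℝ :=
  ∑ S ∈ (univ.erase i).powerset, w S * (v (insert i S) - v S)

/-- The discrete measure on subsets of `D` assigning mass `w T` to each `T ⊆ D`.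
For `D = N∖{i}` and nonnegative weights summing to one this is `P_i^{(h)}`. -/
def subsetMeasure (k : ℕ) (D : Finset (Fin k)) (w : Finset (Fin k) → ℝ) :
    Measure (Finset (Fin k)) :=
  ∑ T ∈ D.powerset, (ENNReal.ofReal (w T)) • Measure.dirac T

/-- `Δ_i(S, x; x*, f) = f(x*_{S∪{i}}, x_{-(S∪{i})}) - f(x*_S, x_{-S})`. -/
def deltaFun (n : ℕ) (f : (Fin n → ℝ) → ℝ) (i : Fin n) (xs : Fin n → ℝ) :
    Finset (Fin n) × (Fin n → ℝ) → ℝ :=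
  fun q => f (merge n (insert i q.1) xs q.2) - f (merge n q.1 xs q.2)

/-! For fixed `x*`, the estimator is the sample mean of the i.i.d. variables
`Δ_i(𝒮^(k), X^(k); x*, f)`. Since `P_i^{(h)} ⊗ P_X = ∑_T w(T) δ_T ⊗ P_X` is a finite mixture,
the common mean of these variables is `∑_T w(T) (v(T ∪ {i}) - v(T)) = h_i[N, v^{ME}]`, so the
estimator is unbiased, converges by the strong law of large numbers, and has mean square error
`Var(Δ)/K ≤ E[Δ²]/K`. Bounding `(a - b)² ≤ 2a² + 2b²` gives
`E[Δ²] ≤ 2 max w · ∑_T (E f(x*_{T∪{i}}, X)² + E f(x*_T, X)²) = 2 max w · ν_{x*}^{(2)}(f)`, because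
`T ↦ T` and `T ↦ T ∪ {i}` together enumerate every coalition exactly once. All slices
`x ↦ f(x*_S, x)` are integrable for `P_X`-a.e. `x*` by Fubini, since
`P_{X_S} ⊗ P_{X_{-S}} ≤ 2^n P̃_X`. -/

section MonteCarlo

variable {α Ω : Type*} [MeasurableSpace Ω] {Pr : Measure Ω} {Z : ℕ → Ω → α} {G : α → ℝ}

def sampleMean (G : α → ℝ) (Z : ℕ → Ω → α) (K : ℕ) (ω : Ω) : ℝ :=
  (K : ℝ)⁻¹ * ∑ k ∈ range K, G (Z k ω)

lemma aestronglyMeasurable_sampleMean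
    (hG : ∀ k, AEStronglyMeasurable (fun ω => G (Z k ω)) Pr) (K : ℕ) :
    AEStronglyMeasurable (sampleMean G Z K) Pr :=
  aestronglyMeasurable_const.mul (Finset.aestronglyMeasurable_fun_sum _ fun k _ => hG k)

variable [MeasurableSpace α] {μ : Measure α}

lemma integral_sampleMean (hZ : ∀ k, Measurable (Z k)) (hlaw : ∀ k, Pr.map (Z k) = μ)
    (hG : Integrable G μ) {K : ℕ} (hK : K ≠ 0) :
    ∫ ω, sampleMean G Z K ω ∂Pr = ∫ a, G a ∂μ := by
  have hmean : ∀ k, ∫ ω, G (Z k ω) ∂Pr = ∫ a, G a ∂μ := fun k => by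
    rw [← hlaw k, integral_map (hZ k).aemeasurable (hlaw k ▸ hG.1)]
  have hint : ∀ k, Integrable (fun ω => G (Z k ω)) Pr := fun k =>
    ((hlaw k).symm ▸ hG).comp_measurable (hZ k)
  simp only [sampleMean, integral_const_mul, integral_finsetSum _ fun k _ => hint k, hmean,
    sum_const, card_range, nsmul_eq_mul]
  field_simp

lemma tendstoInMeasure_sampleMean [IsFiniteMeasure Pr] (hZ : ∀ k, Measurable (Z k))
    (hlaw : ∀ k, Pr.map (Z k) = μ) (hindep : iIndepFun Z Pr) (hG : Integrable G μ) :
    TendstoInMeasure Pr (fun K ω => sampleMean G Z K ω - ∫ a, G a ∂μ) atTop (fun _ => 0) := by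
  have hGZ : ∀ k, AEMeasurable G (Pr.map (Z k)) := fun k => hlaw k ▸ hG.1.aemeasurable
  have hint : ∀ k, Integrable (fun ω => G (Z k ω)) Pr := fun k =>
    ((hlaw k).symm ▸ hG).comp_measurable (hZ k)
  have hpair : Pairwise fun j k => (fun ω => G (Z j ω)) ⟂ᵢ[Pr] fun ω => G (Z k ω) :=
    fun j k hjk => (hindep.indepFun hjk).comp₀ (hZ j).aemeasurable (hZ k).aemeasurable
      (hGZ j) (hGZ k)
  have hident : ∀ k, IdentDistrib (fun ω => G (Z k ω)) (fun ω => G (Z 0 ω)) Pr Pr := fun k =>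
    (IdentDistrib.mk (hZ k).aemeasurable (hZ 0).aemeasurable
      (by rw [hlaw, hlaw])).comp_of_aemeasurable (hGZ k)
  have hmean : ∫ ω, G (Z 0 ω) ∂Pr = ∫ a, G a ∂μ := by
    rw [← hlaw 0, integral_map (hZ 0).aemeasurable (hlaw 0 ▸ hG.1)]
  refine tendstoInMeasure_of_tendsto_ae
    (fun K => (aestronglyMeasurable_sampleMean (fun k => (hint k).1) K).sub
      aestronglyMeasurable_const) ?_
  filter_upwards [strong_law_ae_real _ (hint 0) hpair hident] with ω hω
  have := hω.sub_const (∫ a, G a ∂μ)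
  rw [hmean, sub_self] at this
  simpa only [sampleMean, div_eq_inv_mul] using this

lemma integral_sq_sampleMean_sub_le [IsProbabilityMeasure Pr] (hZ : ∀ k, Measurable (Z k))
    (hlaw : ∀ k, Pr.map (Z k) = μ) (hindep : iIndepFun Z Pr) (hG : MemLp G 2 μ) {K : ℕ}
    (hK : K ≠ 0) :
    ∫ ω, (sampleMean G Z K ω - ∫ a, G a ∂μ) ^ 2 ∂Pr ≤ (∫ a, G a ^ 2 ∂μ) / K := by
  have : IsProbabilityMeasure μ := hlaw 0 ▸ Measure.isProbabilityMeasure_map (hZ 0).aemeasurable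
  have hGZ : ∀ k, AEMeasurable G (Pr.map (Z k)) := fun k => hlaw k ▸ hG.1.aemeasurable
  have hM : ∀ k, MemLp (fun ω => G (Z k ω)) 2 Pr := fun k =>
    ((hlaw k).symm ▸ hG).comp_of_map (hZ k).aemeasurable
  have hsq : ∀ k, ∫ ω, G (Z k ω) ^ 2 ∂Pr = ∫ a, G a ^ 2 ∂μ := fun k => by
    rw [← hlaw k, integral_map (hZ k).aemeasurable (hlaw k ▸ (hG.1.pow 2))]
  have hpair : Set.Pairwise ↑(range K) fun j k =>
      (fun ω => G (Z j ω)) ⟂ᵢ[Pr] fun ω => G (Z k ω) := fun j _ k _ hjk =>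
    (hindep.indepFun hjk).comp₀ (hZ j).aemeasurable (hZ k).aemeasurable (hGZ j) (hGZ k)
  have hfun : sampleMean G Z K = fun ω => (K : ℝ)⁻¹ * (∑ k ∈ range K, fun ω => G (Z k ω)) ω := by
    ext ω; simp only [sampleMean, Finset.sum_apply]
  rw [← integral_sampleMean hZ hlaw (hG.integrable one_le_two) hK,
    ← variance_eq_integral (aestronglyMeasurable_sampleMean (fun k => (hM k).1) K).aemeasurable]
  calc variance (sampleMean G Z K) Pr
      = (K : ℝ)⁻¹ ^ 2 * ∑ k ∈ range K, variance (fun ω => G (Z k ω)) Pr := by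
        rw [hfun, variance_const_mul, IndepFun.variance_sum (fun k _ => hM k) hpair]
    _ ≤ (K : ℝ)⁻¹ ^ 2 * ∑ k ∈ range K, ∫ a, G a ^ 2 ∂μ := by
        gcongr with k
        exact (variance_le_expectation_sq (hM k).1).trans_eq (hsq k)
    _ = (∫ a, G a ^ 2 ∂μ) / K := by
        rw [sum_const, card_range, nsmul_eq_mul]
        field_simp

end MonteCarlo

instance {k : ℕ} : DiscreteMeasurableSpace (Finset (Fin k)) := ⟨fun _ => trivial⟩

section SubsetMeasure

variable {k : ℕ} {β : Type*} [MeasurableSpace β] {D : Finset (Fin k)} {w : Finset (Fin k) → ℝ}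
  {P : Measure β} {G : Finset (Fin k) × β → ℝ}

lemma subsetMeasure_prod [SFinite P] :
    (subsetMeasure k D w).prod P = ∑ T ∈ D.powerset, ENNReal.ofReal (w T) • P.map (Prod.mk T) := by
  ext s hs
  simp only [Measure.prod_apply hs, subsetMeasure, Measure.finsetSum_apply, Measure.smul_apply,
    lintegral_finsetSum_measure, lintegral_smul_measure, lintegral_dirac,
    Measure.map_apply measurable_prodMk_left hs, smul_eq_mul]

lemma integrable_ofReal_smul_map_prodMk {T : Finset (Fin k)} (c : ℝ)
    (hG : Integrable (fun x => G (T, x)) P) : Integrable G (ENNReal.ofReal c • P.map (Prod.mk T)) :=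
  ((measurableEmbedding_prodMk_left T).integrable_map_iff.mpr hG).smul_measure
    ENNReal.ofReal_ne_top

lemma integrable_subsetMeasure_prod [SFinite P]
    (hG : ∀ T ∈ D.powerset, Integrable (fun x => G (T, x)) P) :
    Integrable G ((subsetMeasure k D w).prod P) := by
  rw [subsetMeasure_prod, integrable_finsetSum_measure]
  exact fun T hT => integrable_ofReal_smul_map_prodMk _ (hG T hT)

lemma integral_subsetMeasure_prod [SFinite P] (hw : ∀ T ∈ D.powerset, 0 ≤ w T)
    (hG : ∀ T ∈ D.powerset, Integrable (fun x => G (T, x)) P) :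
    ∫ q, G q ∂(subsetMeasure k D w).prod P = ∑ T ∈ D.powerset, w T * ∫ x, G (T, x) ∂P := by
  rw [subsetMeasure_prod,
    integral_finsetSum_measure fun T hT => integrable_ofReal_smul_map_prodMk _ (hG T hT)]
  refine sum_congr rfl fun T hT => ?_
  rw [integral_smul_measure, ENNReal.toReal_ofReal (hw T hT),
    (measurableEmbedding_prodMk_left T).integral_map, smul_eq_mul]

end SubsetMeasure

lemma MeasureTheory.MemLp.ae_memLp_prodMk {α β E : Type*} [MeasurableSpace α] [MeasurableSpace β]
    [NormedAddCommGroup E] {μ : Measure α} {ν : Measure β} [SFinite μ] [SFinite ν]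
    {p : ℝ≥0∞} (hp0 : p ≠ 0) (hp : p ≠ ∞) {F : α × β → E} (hF : MemLp F p (μ.prod ν)) :
    ∀ᵐ x ∂μ, MemLp (fun y => F (x, y)) p ν := by
  have hint : Integrable (fun z => ‖F z‖ ^ p.toReal) (μ.prod ν) := by
    rw [← memLp_one_iff_integrable, ← ENNReal.div_self hp0 hp]
    exact (memLp_norm_rpow_iff hF.1 hp0 hp).mpr hF
  filter_upwards [hF.1.prodMk_left, hint.prod_right_ae] with x hmeas hx
  rw [← memLp_norm_rpow_iff hmeas hp0 hp, ENNReal.div_self hp0 hp, memLp_one_iff_integrable]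
  exact hx

lemma measurable_merge {n : ℕ} (S : Finset (Fin n)) :
    Measurable fun q : (Fin n → ℝ) × (Fin n → ℝ) => merge n S q.1 q.2 :=
  measurable_pi_lambda _ fun j => by unfold merge; split_ifs <;> fun_prop

lemma prodPart_le_smul_tildeP (n : ℕ) (P : Measure (Fin n → ℝ)) (S : Finset (Fin n)) :
    prodPart n P S ≤ (2 : ℝ≥0∞) ^ n • tildeP n P := by
  rw [tildeP, smul_smul, ENNReal.mul_inv_cancel (by positivity) (by simp), one_smul]
  exact single_le_sum (fun _ _ => Measure.zero_le _) (mem_univ S)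

section MarginalGame

variable {n : ℕ} {P : Measure (Fin n → ℝ)} {f : (Fin n → ℝ) → ℝ}

lemma MeasureTheory.MemLp.comp_merge {p : ℝ≥0∞} (hf : MemLp f p (tildeP n P))
    (S : Finset (Fin n)) :
    MemLp (fun q : (Fin n → ℝ) × (Fin n → ℝ) => f (merge n S q.1 q.2)) p (P.prod P) :=
  (hf.of_measure_le_smul (by simp) (prodPart_le_smul_tildeP n P S)).comp_of_map
    (measurable_merge S).aemeasurable

lemma ae_memLp_merge [SFinite P] {p : ℝ≥0∞} (hp0 : p ≠ 0) (hp : p ≠ ∞)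
    (hf : MemLp f p (tildeP n P)) :
    ∀ᵐ xs ∂P, ∀ S, MemLp (fun x => f (merge n S xs x)) p P :=
  ae_all_iff.mpr fun S => (hf.comp_merge S).ae_memLp_prodMk hp0 hp

variable [SFinite P] {i : Fin n} {xs : Fin n → ℝ} {w : Finset (Fin n) → ℝ}

lemma integrable_deltaFun (h : ∀ S, Integrable (fun x => f (merge n S xs x)) P)
    (D : Finset (Fin n)) : Integrable (deltaFun n f i xs) ((subsetMeasure n D w).prod P) :=
  integrable_subsetMeasure_prod fun T _ => (h (insert i T)).sub (h T)

lemma integral_deltaFun (hw : ∀ T ∈ (univ.erase i).powerset, 0 ≤ w T)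
    (h : ∀ S, Integrable (fun x => f (merge n S xs x)) P) :
    ∫ q, deltaFun n f i xs q ∂(subsetMeasure n (univ.erase i) w).prod P
      = gameValue n w i (vME n P f xs) := by
  rw [integral_subsetMeasure_prod hw fun T _ => (h (insert i T)).sub (h T)]
  exact sum_congr rfl fun T _ => congrArg (w T * ·) (integral_sub (h (insert i T)) (h T))

lemma memLp_two_deltaFun [IsFiniteMeasure P] (h : ∀ S, MemLp (fun x => f (merge n S xs x)) 2 P)
    (D : Finset (Fin n)) : MemLp (deltaFun n f i xs) 2 ((subsetMeasure n D w).prod P) :=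
  (memLp_two_iff_integrable_sq
    (integrable_deltaFun (fun S => (h S).integrable one_le_two) D).1).mpr
    (integrable_subsetMeasure_prod fun T _ => ((h (insert i T)).sub (h T)).integrable_sq)

lemma integral_deltaFun_sq_le (hw : ∀ T ∈ (univ.erase i).powerset, 0 ≤ w T)
    (h : ∀ S, MemLp (fun x => f (merge n S xs x)) 2 P) :
    ∫ q, deltaFun n f i xs q ^ 2 ∂(subsetMeasure n (univ.erase i) w).prod P
      ≤ 2 * (univ.erase i).powerset.sup' ⟨∅, empty_mem_powerset _⟩ w
        * ∑ S : Finset (Fin n), ∫ x, |f (merge n S xs x)| ^ 2 ∂P := by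
  set wmax := (univ.erase i).powerset.sup' ⟨∅, empty_mem_powerset _⟩ w
  set a : Finset (Fin n) → ℝ := fun S => ∫ x, f (merge n S xs x) ^ 2 ∂P
  have hwmax : 0 ≤ wmax := le_sup'_of_le w (empty_mem_powerset _) (hw ∅ (empty_mem_powerset _))
  have hsq : ∀ T, ∫ x, deltaFun n f i xs (T, x) ^ 2 ∂P ≤ 2 * (a (insert i T) + a T) := fun T => by
    have h₁ := h (insert i T)
    have h₂ := h T
    simp only [a]
    rw [← integral_add h₁.integrable_sq h₂.integrable_sq, ← integral_const_mul]
    refine integral_mono (h₁.sub h₂).integrable_sq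
      ((h₁.integrable_sq.add h₂.integrable_sq).const_mul 2) fun x => ?_
    have := add_sq_le (a := f (merge n (insert i T) xs x)) (b := -f (merge n T xs x))
    rwa [← sub_eq_add_neg, neg_sq] at this
  calc ∫ q, deltaFun n f i xs q ^ 2 ∂(subsetMeasure n (univ.erase i) w).prod P
      = ∑ T ∈ (univ.erase i).powerset, w T * ∫ x, deltaFun n f i xs (T, x) ^ 2 ∂P :=
        integral_subsetMeasure_prod hw fun T _ => ((h (insert i T)).sub (h T)).integrable_sq
    _ ≤ ∑ T ∈ (univ.erase i).powerset, wmax * (2 * (a (insert i T) + a T)) :=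
        sum_le_sum fun T hT => mul_le_mul (le_sup' w hT) (hsq T)
          (integral_nonneg fun _ => sq_nonneg _) hwmax
    _ = 2 * wmax * ∑ S : Finset (Fin n), a S := by
        rw [← mul_sum, ← mul_sum, sum_add_distrib, add_comm,
          ← sum_powerset_insert (notMem_erase i _), insert_erase (mem_univ i), powerset_univ]
        ring
    _ = 2 * wmax * ∑ S : Finset (Fin n), ∫ x, |f (merge n S xs x)| ^ 2 ∂P := by
        simp only [a, sq_abs]

end MarginalGame

theorem stmt7_general (n : ℕ) (P : Measure (Fin n → ℝ)) [IsProbabilityMeasure P]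
    (f : (Fin n → ℝ) → ℝ) (hf : MemLp f 1 (tildeP n P))
    (i : Fin n) (w : Finset (Fin n) → ℝ)
    (hw0 : ∀ S ∈ (univ.erase i).powerset, 0 ≤ w S)
    {Ω : Type} [MeasurableSpace Ω] (Pr : Measure Ω) [IsProbabilityMeasure Pr]
    (Z : ℕ → Ω → Finset (Fin n) × (Fin n → ℝ))
    (hZmeas : ∀ k, Measurable (Z k))
    (hlaw : ∀ k, Measure.map (Z k) Pr = (subsetMeasure n (univ.erase i) w).prod P)
    (hindep : iIndepFun Z Pr) :
    ∀ᵐ xs ∂P,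
      (∀ K : ℕ, 0 < K →
        ∫ ω, (K : ℝ)⁻¹ * ∑ k ∈ Finset.range K, deltaFun n f i xs (Z k ω) ∂Pr
          = gameValue n w i (vME n P f xs)) ∧
      TendstoInMeasure Pr
        (fun (K : ℕ) (ω : Ω) => (K : ℝ)⁻¹ * ∑ k ∈ Finset.range K, deltaFun n f i xs (Z k ω)
          - gameValue n w i (vME n P f xs)) atTop (fun _ => 0) ∧
      (MemLp f 2 (tildeP n P) →
        ∀ K : ℕ, 0 < K →
          ∫ ω, ((K : ℝ)⁻¹ * ∑ k ∈ Finset.range K, deltaFun n f i xs (Z k ω)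
              - gameValue n w i (vME n P f xs)) ^ 2 ∂Pr
            ≤ (4 / K) *
                ((univ.erase i).powerset.sup' ⟨∅, Finset.empty_mem_powerset _⟩ w) *
                ∑ S : Finset (Fin n), ∫ x, |f (merge n S xs x)| ^ 2 ∂P) := by
  filter_upwards [ae_memLp_merge one_ne_zero one_ne_top hf,
    eventually_imp_distrib_left.mpr (ae_memLp_merge two_ne_zero ofNat_ne_top)] with xs hL1 hL2
  have hslice (S : Finset (Fin n)) : Integrable (fun x => f (merge n S xs x)) P :=
    memLp_one_iff_integrable.mp (hL1 S)
  have hΔ := integrable_deltaFun (i := i) (w := w) hslice (univ.erase i)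
  rw [← integral_deltaFun hw0 hslice]
  refine ⟨fun K hK => integral_sampleMean hZmeas hlaw hΔ hK.ne',
    tendstoInMeasure_sampleMean hZmeas hlaw hindep hΔ, fun hf2 K hK => ?_⟩
  have hwmax : 0 ≤ (univ.erase i).powerset.sup' ⟨∅, empty_mem_powerset _⟩ w :=
    le_sup'_of_le w (empty_mem_powerset _) (hw0 ∅ (empty_mem_powerset _))
  calc _ ≤ (∫ q, deltaFun n f i xs q ^ 2 ∂(subsetMeasure n (univ.erase i) w).prod P) / K :=
        integral_sq_sampleMean_sub_le hZmeas hlaw hindep (memLp_two_deltaFun (hL2 hf2) _) hK.ne'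
    _ ≤ (2 * (univ.erase i).powerset.sup' ⟨∅, empty_mem_powerset _⟩ w
          * ∑ S : Finset (Fin n), ∫ x, |f (merge n S xs x)| ^ 2 ∂P) / K := by
        gcongr
        exact integral_deltaFun_sq_le hw0 (hL2 hf2)
    _ ≤ _ := by
        rw [div_mul_eq_mul_div, div_mul_eq_mul_div]
        gcongr
        norm_num

/-- Consistency and error rate of the Monte Carlo estimator.
Let `f ∈ L¹(P̃_X)`, let the coefficients `w_i(S,N)` be nonnegative and sum to one over
`S ⊆ N∖{i}`, and let `(𝒮^(k), X^(k))`, `k ∈ ℕ`, be i.i.d. samples from `P_i^{(h)} ⊗ P_X`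
defined on a probability space `(Ω, Pr)`. Then for `P_X`-almost every `x*`:
the Monte Carlo estimator `K⁻¹ ∑_{k<K} Δ_i(𝒮^(k), X^(k); x*, f)` is unbiased for
`h_i[N, v^{ME}(·; x*, X, f)]`; the error converges to `0` in probability as `K → ∞`;
and if moreover `f ∈ L²(P̃_X)` then
`‖E_K‖²_{L²(Pr)} ≤ (4/K)·(max_{S⊆N∖{i}} w_i(S,N))·ν_{x*}^{(2)}(f)`. -/
theorem stmt7 (n : ℕ) (P : Measure (Fin n → ℝ)) [IsProbabilityMeasure P]
    (f : (Fin n → ℝ) → ℝ) (hf : MemLp f 1 (tildeP n P))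
    (i : Fin n) (w : Finset (Fin n) → ℝ)
    (hw0 : ∀ S ∈ (univ.erase i).powerset, 0 ≤ w S)
    (hw1 : ∑ S ∈ (univ.erase i).powerset, w S = 1)
    {Ω : Type} [MeasurableSpace Ω] (Pr : Measure Ω) [IsProbabilityMeasure Pr]
    (Z : ℕ → Ω → Finset (Fin n) × (Fin n → ℝ))
    (hZmeas : ∀ k, Measurable (Z k))
    (hlaw : ∀ k, Measure.map (Z k) Pr = (subsetMeasure n (univ.erase i) w).prod P)
    (hindep : iIndepFun Z Pr) :
    ∀ᵐ xs ∂P,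
      (∀ K : ℕ, 0 < K →
        ∫ ω, (K : ℝ)⁻¹ * ∑ k ∈ Finset.range K, deltaFun n f i xs (Z k ω) ∂Pr
          = gameValue n w i (vME n P f xs)) ∧
      TendstoInMeasure Pr
        (fun (K : ℕ) (ω : Ω) => (K : ℝ)⁻¹ * ∑ k ∈ Finset.range K, deltaFun n f i xs (Z k ω)
          - gameValue n w i (vME n P f xs)) atTop (fun _ => 0) ∧
      (MemLp f 2 (tildeP n P) →
        ∀ K : ℕ, 0 < K →
          ∫ ω, ((K : ℝ)⁻¹ * ∑ k ∈ Finset.range K, deltaFun n f i xs (Z k ω)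
              - gameValue n w i (vME n P f xs)) ^ 2 ∂Pr
            ≤ (4 / K) *
                ((univ.erase i).powerset.sup' ⟨∅, Finset.empty_mem_powerset _⟩ w) *
                ∑ S : Finset (Fin n), ∫ x, |f (merge n S xs x)| ^ 2 ∂P) :=
  stmt7_general n P f hf i w hw0 Pr Z hZmeas hlaw hindep
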